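/- arXiv:1208.4447 — 3 statements merged into one kernel-verified Lean document; each statement's English description precedes it below -/
import Mathlib

section
/- Let R be a commutative Noetherian ring and Z a subset of Spec R stable under specialization (i.e., if p ∈ Z and p ⊆ q for primes p, q, then q ∈ Z). For a prime ideal p, the injective envelope E(R/p) of R/p satisfies: Γ_Z(E(R/p)) = E(R/p) if p ∈ Z, and Γ_Z(E(R/p)) = 0 if p ∉ Z, where Γ_Z(M) = {x ∈ M | Supp(Rx) ⊆ Z}. -/
open CategoryTheory CategoryTheory.Limits DirectSum TensorProduct

universe u

/-- A subset of `Spec R` is stable under specialization. -/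
def StableZ (R : Type u) [CommRing R] (Z : Set (PrimeSpectrum R)) : Prop :=
  ∀ p q : PrimeSpectrum R, p ∈ Z → p.asIdeal ≤ q.asIdeal → q ∈ Z

lemma mem_support_span_singleton_iff (R : Type u) [CommRing R] {M : Type u} [AddCommGroup M] [Module R M]
    (x : M) (p : PrimeSpectrum R) :
    p ∈ Module.support R (Submodule.span R ({x} : Set M)) ↔
      (Submodule.span R ({x} : Set M)).annihilator ≤ p.asIdeal := by
  have hgen : Submodule.span R ({(⟨x, Submodule.mem_span_singleton_self x⟩ :
      Submodule.span R ({x} : Set M))} : Set (Submodule.span R ({x} : Set M))) = ⊤ := by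
    ext ⟨m, hm⟩
    simp only [Submodule.mem_top, iff_true]
    obtain ⟨r, hr⟩ := Submodule.mem_span_singleton.mp hm
    exact Submodule.mem_span_singleton.mpr ⟨r, by ext; simpa using hr⟩
  rw [Module.mem_support_iff_of_span_eq_top (hs := hgen)]
  constructor
  · rintro ⟨m, hm, hle⟩
    rw [Set.mem_singleton_iff.mp hm] at hle
    intro r hr
    refine hle ?_
    rw [Submodule.mem_annihilator_span_singleton] at hr ⊢
    refine Subtype.ext ?_
    simpa using hr
  · intro h
    refine ⟨_, Set.mem_singleton _, le_trans ?_ h⟩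
    intro r hr
    rw [Submodule.mem_annihilator_span_singleton] at hr
    have hrx : r • x = 0 := by simpa using congrArg Subtype.val hr
    rw [Submodule.mem_annihilator_span_singleton]
    exact hrx

/-- `Γ_Z(M) = {x ∈ M | Supp (Rx) ⊆ Z}`. -/
def gammaZ (R : Type u) [CommRing R] (Z : Set (PrimeSpectrum R)) (M : Type u) [AddCommGroup M] [Module R M] :
    Submodule R M where
  carrier := {x | Module.support R (Submodule.span R ({x} : Set M)) ⊆ Z}
  zero_mem' := by
    intro p hp
    rw [mem_support_span_singleton_iff] at hp
    exact (p.isPrime.ne_top ((Ideal.eq_top_iff_one _).mpr (hp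
      (by rw [Submodule.mem_annihilator_span_singleton]; simp)))).elim
  add_mem' := by
    intro x y hx hy p hp
    rw [mem_support_span_singleton_iff] at hp
    by_cases hxp : (Submodule.span R ({x} : Set M)).annihilator ≤ p.asIdeal
    · exact hx ((mem_support_span_singleton_iff R x p).mpr hxp)
    · refine hy ((mem_support_span_singleton_iff R y p).mpr ?_)
      obtain ⟨a, ha, hap⟩ := SetLike.not_le_iff_exists.mp hxp
      intro b hb
      have hax : a • x = 0 := by
        simpa using (Submodule.mem_annihilator_span_singleton x a).mp ha
      have hby : b • y = 0 := by
        simpa using (Submodule.mem_annihilator_span_singleton y b).mp hb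
      have : a * b ∈ p.asIdeal := by
        refine hp ?_
        rw [Submodule.mem_annihilator_span_singleton]
        rw [smul_add, show (a * b) • x = b • (a • x) by rw [mul_comm, mul_smul], hax,
          smul_zero, zero_add, mul_smul, hby, smul_zero]
      rcases p.isPrime.mem_or_mem this with h | h
      · exact absurd h hap
      · exact h
  smul_mem' := by
    intro c x hx p hp
    rw [mem_support_span_singleton_iff] at hp
    refine hx ((mem_support_span_singleton_iff R x p).mpr (le_trans ?_ hp))
    intro r hr
    rw [Submodule.mem_annihilator_span_singleton] at hr ⊢
    rw [smul_comm, hr, smul_zero]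

/-- `ι : M →ₗ[R] E` exhibits `E` as an injective envelope (injective hull) of `M`:
`E` is injective, `ι` is injective, and the image of `ι` is an essential submodule of `E`. -/
structure IsInjectiveEnvelope (R : Type u) [CommRing R] (M E : Type u) [AddCommGroup M]
    [Module R M] [AddCommGroup E] [Module R E] (ι : M →ₗ[R] E) : Prop where
  injective : Module.Injective R E
  mono : Function.Injective ι
  essential : ∀ N : Submodule R E, N ≠ ⊥ → N ⊓ LinearMap.range ι ≠ ⊥

/-!
`E(R/p)` is an essential extension of `R/p`, and an essential extension has no associated primes
beyond those of the submodule, so `Ass E = {p}`. Over a Noetherian ring this determines the support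
of every nonzero cyclic submodule `Rx ⊆ E`: `ann x` lies in an associated prime, hence in `p`, and
every minimal prime over `ann x` is associated, hence equal to `p`. So `Supp (Rx) = V(p)` for
`x ≠ 0`, which lies in `Z` exactly when `p` does, by stability under specialization.
-/

section AssociatedPrimes

variable {R : Type*} [CommRing R] {M : Type*} [AddCommGroup M] [Module R M]

lemma colon_bot_smul_singleton_eq_of_isPrime {y : M}
    (hy : ((⊥ : Submodule R M).colon {y}).IsPrime) {s : R} (hs : s • y ≠ 0) :
    (⊥ : Submodule R M).colon {s • y} = (⊥ : Submodule R M).colon {y} := by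
  have hs' : s ∉ (⊥ : Submodule R M).colon {y} := by
    rwa [Submodule.mem_colon_singleton, Submodule.mem_bot]
  ext r
  rw [Submodule.mem_colon_singleton, smul_smul, ← Submodule.mem_colon_singleton]
  exact ⟨fun h ↦ (hy.mem_or_mem h).resolve_right hs', fun h ↦ Ideal.mul_mem_right s _ h⟩

variable [IsNoetherianRing R]

theorem associatedPrimes_eq_of_essential {E : Type*} [AddCommGroup E] [Module R E]
    (f : M →ₗ[R] E) (hf : Function.Injective f)
    (hess : ∀ N : Submodule R E, N ≠ ⊥ → N ⊓ LinearMap.range f ≠ ⊥) :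
    associatedPrimes R E = associatedPrimes R M := by
  refine subset_antisymm ?_ (associatedPrimes.subset_of_injective hf)
  intro I hI
  rw [AssociatedPrimes.mem_iff, isAssociatedPrime_iff] at hI ⊢
  obtain ⟨hI, y, rfl⟩ := hI
  have hy : Submodule.span R {y} ≠ ⊥ := by
    rintro h
    rw [Submodule.span_singleton_eq_bot.mp h, Submodule.colon_singleton_zero] at hI
    exact hI.ne_top rfl
  obtain ⟨_, ⟨hsy, m, rfl⟩, hm⟩ := (Submodule.ne_bot_iff _).mp (hess _ hy)
  obtain ⟨s, hs⟩ := Submodule.mem_span_singleton.mp hsy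
  refine ⟨hI, m, ?_⟩
  rw [← colon_bot_smul_singleton_eq_of_isPrime hI (hs ▸ hm), hs]
  ext r
  simp only [Submodule.mem_colon_singleton, Submodule.mem_bot, ← map_smul, map_eq_zero_iff f hf]

theorem associatedPrimes_quotient_of_isPrime (p : Ideal R) [hp : p.IsPrime] :
    associatedPrimes R (R ⧸ p) = {p} := by
  simpa [hp.radical] using associatedPrimes.eq_singleton_of_isPrimary hp.isPrimary

theorem exists_mem_associatedPrimes_le_of_mem_support [Module.Finite R M] {q : PrimeSpectrum R}
    (hq : q ∈ Module.support R M) : ∃ P ∈ associatedPrimes R M, P ≤ q.asIdeal := by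
  rw [Module.mem_support_iff_of_finite] at hq
  obtain ⟨P, hP, hPq⟩ := Ideal.exists_minimalPrimes_le hq
  exact ⟨P, Module.associatedPrimes.minimalPrimes_annihilator_subset_associatedPrimes R M hP, hPq⟩

theorem support_span_singleton_eq_of_associatedPrimes_eq_singleton {p : Ideal R}
    (hM : associatedPrimes R M = {p}) {x : M} (hx : x ≠ 0) :
    Module.support R (Submodule.span R {x}) = {q | p ≤ q.asIdeal} := by
  ext q
  constructor
  · intro hq
    obtain ⟨P, hP, hPq⟩ := exists_mem_associatedPrimes_le_of_mem_support hq
    have hPp : P ∈ ({p} : Set (Ideal R)) :=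
      hM ▸ associatedPrimes.subset_of_injective (Submodule.injective_subtype _) hP
    exact Set.mem_singleton_iff.mp hPp ▸ hPq
  · intro hpq
    obtain ⟨P, hP, hxP⟩ := exists_le_isAssociatedPrime_of_isNoetherianRing R x hx
    have hPp : P ∈ ({p} : Set (Ideal R)) := hM ▸ hP
    rw [Module.mem_support_iff_of_finite]
    change (Submodule.span R {x}).annihilator ≤ q.asIdeal
    rw [← Submodule.bot_colon']
    exact hxP.trans (Set.mem_singleton_iff.mp hPp ▸ hpq)

end AssociatedPrimes

/-- for `Z ⊆ Spec R` stable under specialization and `E = E(R/p)` the injective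
envelope of `R/p`, `Γ_Z(E) = E` if `p ∈ Z` and `Γ_Z(E) = 0` if `p ∉ Z`. -/
theorem gammaZ_injectiveEnvelope (R : Type u) [CommRing R] [IsNoetherianRing R]
    (Z : Set (PrimeSpectrum R)) (hZ : StableZ R Z) (p : PrimeSpectrum R)
    (E : Type u) [AddCommGroup E] [Module R E]
    (ι : (R ⧸ p.asIdeal) →ₗ[R] E) (hE : IsInjectiveEnvelope R (R ⧸ p.asIdeal) E ι) :
    (p ∈ Z → gammaZ R Z E = ⊤) ∧ (p ∉ Z → gammaZ R Z E = ⊥) := by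
  have hAss : associatedPrimes R E = {p.asIdeal} :=
    (associatedPrimes_eq_of_essential ι hE.mono hE.essential).trans
      (associatedPrimes_quotient_of_isPrime p.asIdeal)
  have hSupp (x : E) (hx : x ≠ 0) :
      Module.support R (Submodule.span R {x}) = {q | p.asIdeal ≤ q.asIdeal} :=
    support_span_singleton_eq_of_associatedPrimes_eq_singleton hAss hx
  constructor
  · intro hp
    refine eq_top_iff.mpr fun x _ ↦ ?_
    rcases eq_or_ne x 0 with rfl | hx
    · exact zero_mem _
    · show Module.support R _ ⊆ Z
      rw [hSupp x hx]
      exact fun q ↦ hZ p q hp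
  · intro hp
    refine eq_bot_iff.mpr fun x hx ↦ (Submodule.mem_bot R).mpr ?_
    by_contra hx0
    exact hp (hx (by rw [hSupp x hx0]; exact le_refl p.asIdeal))
end

section
/- Let R be a commutative Noetherian ring, Z ⊆ Spec R stable under specialization, and M a finitely generated R-module such that Supp_R(M) ∩ Z consists of finitely many maximal ideals. Then Γ_Z(M) is an Artinian R-module. -/
/-! Every prime in the support of `Γ_Z(M)` lies in `Supp M ∩ Z`, hence is maximal. So
`R ⧸ Ann Γ_Z(M)` is a Noetherian ring of Krull dimension zero, i.e. an Artinian ring, and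
`Γ_Z(M)` is a finitely generated module over it. -/

open CategoryTheory CategoryTheory.Limits DirectSum TensorProduct

universe u

lemma Module.supportDim_nonpos_of_forall_isMaximal {R N : Type*} [CommRing R] [AddCommGroup N]
    [Module R N] (h : ∀ p ∈ Module.support R N, p.asIdeal.IsMaximal) :
    Module.supportDim R N ≤ 0 :=
  Order.krullDim_nonpos_iff_forall_isMax.mpr fun p q hpq =>
    ((h p.1 p.2).eq_of_le q.1.isPrime.ne_top hpq).ge

lemma Module.isArtinian_of_supportDim_nonpos {R N : Type*} [CommRing R] [IsNoetherianRing R]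
    [AddCommGroup N] [Module R N] [Module.Finite R N] (h : Module.supportDim R N ≤ 0) :
    IsArtinian R N := by
  let S := R ⧸ Module.annihilator R N
  let _ : Module S N := Module.quotientAnnihilator
  have : Ring.KrullDimLE 0 S :=
    Ring.krullDimLE_iff.mpr (Module.supportDim_eq_ringKrullDim_quotient_annihilator R N ▸ h)
  have : IsArtinianRing S := IsNoetherianRing.isArtinianRing_of_krullDimLE_zero
  have : Module.Finite S N := Module.Finite.of_restrictScalars_finite R S N
  exact ((Module.isTorsionBySet_annihilator R N).semilinearMap.isArtinian_iff_of_bijective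
    Function.bijective_id).mpr inferInstance

lemma support_gammaZ_subset {R : Type u} [CommRing R] {Z : Set (PrimeSpectrum R)}
    {M : Type u} [AddCommGroup M] [Module R M] :
    Module.support R (gammaZ R Z M) ⊆ Module.support R M ∩ Z := by
  intro p hp
  refine ⟨Module.support_subset_of_injective _ (gammaZ R Z M).injective_subtype hp, ?_⟩
  obtain ⟨x, hx⟩ := Module.mem_support_iff_exists_annihilator.mp hp
  refine x.2 ((mem_support_span_singleton_iff R (x : M) p).mpr (le_trans ?_ hx))
  intro r hr
  rw [Submodule.mem_annihilator_span_singleton] at hr ⊢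
  exact Subtype.ext hr

theorem isArtinian_gammaZ_general (R : Type u) [CommRing R] [IsNoetherianRing R]
    (Z : Set (PrimeSpectrum R))
    (M : Type u) [AddCommGroup M] [Module R M] [Module.Finite R M]
    (hmax : ∀ p ∈ Module.support R M ∩ Z, p.asIdeal.IsMaximal) :
    IsArtinian R (gammaZ R Z M) :=
  Module.isArtinian_of_supportDim_nonpos <| Module.supportDim_nonpos_of_forall_isMaximal
    fun _ hp => hmax _ (support_gammaZ_subset hp)

/-- if `M` is a finitely generated module and `Supp M ∩ Z` consists of
finitely many maximal ideals, then `Γ_Z(M)` is Artinian. -/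
theorem isArtinian_gammaZ (R : Type u) [CommRing R] [IsNoetherianRing R]
    (Z : Set (PrimeSpectrum R)) (hZ : StableZ R Z)
    (M : Type u) [AddCommGroup M] [Module R M] [Module.Finite R M]
    (hfin : (Module.support R M ∩ Z).Finite)
    (hmax : ∀ p ∈ Module.support R M ∩ Z, p.asIdeal.IsMaximal) :
    IsArtinian R (gammaZ R Z M) :=
  isArtinian_gammaZ_general R Z M hmax
end

section
/- Let (R, m, k) be a Noetherian local ring and A an Artinian R-module. Then Att_R(A) = Ass_R(Hom_R(A, E(R/m))), where E(R/m) is the injective envelope of the residue field. -/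
universe u

/-- `p` is an attached prime of the `R`-module `M`. -/
def IsAttachedPrime (R : Type u) [CommRing R] (M : Type u) [AddCommGroup M] [Module R M]
    (p : Ideal R) : Prop :=
  p.IsPrime ∧ ∃ N : Submodule R M, Module.annihilator R (M ⧸ N) = p

/-- The set of attached primes of `M`. -/
def attachedPrimes (R : Type u) [CommRing R] (M : Type u) [AddCommGroup M] [Module R M] :
    Set (Ideal R) :=
  {p | IsAttachedPrime R M p}

/-!
A nonzero `x : M` is detected by some `M →ₗ[R] E`: `R ∙ x ≅ R ⧸ ann x` maps onto `R ⧸ m ⊆ E`,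
and the map extends to `M` by injectivity of `E`. Since `f : A →ₗ[R] E` is annihilated by
exactly `ann (A ⧸ ker f)`, associated primes of the dual are attached. Conversely, if
`p = ann (A ⧸ N)` is prime, Artinianity gives `r₀ ∉ p` with `r • r₀ • (A ⧸ N) = r₀ • (A ⧸ N)`
for all `r ∉ p`; a map `A ⧸ N → E` not vanishing on a nonzero element of `r₀ • (A ⧸ N)` then
has annihilator exactly `p`.
-/

open IsLocalRing Pointwise

theorem IsLocalRing.exists_linearMap_apply_ne_zero {R : Type u} [CommRing R] [IsLocalRing R]
    {E : Type u} [AddCommGroup E] [Module R E] [Module.Injective R E]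
    {ι : (R ⧸ maximalIdeal R) →ₗ[R] E} (hι : Function.Injective ι)
    {M : Type*} [AddCommGroup M] [Module R M] {x : M} (hx : x ≠ 0) :
    ∃ f : M →ₗ[R] E, f x ≠ 0 := by
  have hle : Ideal.torsionOf R M x ≤ maximalIdeal R :=
    le_maximalIdeal (mt (Ideal.torsionOf_eq_top_iff R x).1 hx)
  let e := Ideal.quotTorsionOfEquivSpanSingleton R M x
  obtain ⟨f, hf⟩ := Module.Injective.extension_property R E _ _ (R ∙ x).subtype
    (Submodule.injective_subtype _) (ι ∘ₗ Submodule.factor hle ∘ₗ e.symm.toLinearMap)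
  have he : e.symm ⟨x, Submodule.mem_span_singleton_self x⟩ = Submodule.Quotient.mk 1 := by
    rw [LinearEquiv.symm_apply_eq, Ideal.quotTorsionOfEquivSpanSingleton_apply_mk, one_smul]
  refine ⟨f, fun hfx => notMem_maximalIdeal.2 (isUnit_one (M := R)) ?_⟩
  have hι1 : ι (Submodule.Quotient.mk 1) = 0 := by
    simpa [he, hfx] using (LinearMap.congr_fun hf ⟨x, Submodule.mem_span_singleton_self x⟩).symm
  exact (Submodule.Quotient.mk_eq_zero _).1 ((map_eq_zero_iff ι hι).1 hι1)

theorem IsArtinian.exists_ne_zero_forall_exists_smul_eq {R M : Type*} [CommRing R]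
    [AddCommGroup M] [Module R M] [IsArtinian R M] (hp : (Module.annihilator R M).IsPrime) :
    ∃ x : M, x ≠ 0 ∧ ∀ r ∉ Module.annihilator R M, ∃ y, r • y = x := by
  set p := Module.annihilator R M
  obtain ⟨_, ⟨r₀, hr₀, rfl⟩, hmin⟩ := IsArtinian.set_has_minimal
    {N | ∃ r ∉ p, r • (⊤ : Submodule R M) = N} ⟨_, 1, hp.one_notMem (I := p), rfl⟩
  obtain ⟨m, hm⟩ : ∃ m : M, r₀ • m ≠ 0 := by
    by_contra! h
    exact hr₀ (Module.mem_annihilator.2 h)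
  refine ⟨r₀ • m, hm, fun r hr => ?_⟩
  have hstable : r • (r₀ • ⊤ : Submodule R M) = r₀ • ⊤ :=
    (Submodule.smul_le_self_of_tower r _).eq_of_not_lt
      (hmin _ ⟨r * r₀, hp.mul_notMem hr hr₀, mul_smul r r₀ ⊤⟩)
  obtain ⟨y, -, hy⟩ := (Submodule.mem_smul_pointwise_iff_exists _ r _).1
    (hstable ▸ Submodule.smul_mem_pointwise_smul m r₀ ⊤ Submodule.mem_top)
  exact ⟨y, hy⟩

section ColonAnnihilator

variable {R M N : Type*} [CommRing R] [AddCommGroup M] [Module R M] [AddCommGroup N] [Module R N]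

theorem LinearMap.colon_bot_singleton_eq_annihilator_quotient_ker (f : M →ₗ[R] N) :
    (⊥ : Submodule R (M →ₗ[R] N)).colon {f} = Module.annihilator R (M ⧸ LinearMap.ker f) := by
  ext r
  simp only [Submodule.mem_colon_singleton, Submodule.mem_bot, Module.mem_annihilator,
    LinearMap.ext_iff, LinearMap.smul_apply, LinearMap.zero_apply]
  constructor
  · rintro h ⟨m⟩
    exact (Submodule.Quotient.mk_eq_zero _).2 (by simpa using h m)
  · intro h m
    simpa using (Submodule.Quotient.mk_eq_zero _).1 (h (Submodule.Quotient.mk m))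

theorem LinearMap.colon_bot_singleton_eq_annihilator {g : M →ₗ[R] N} {x : M} (hx : g x ≠ 0)
    (hdiv : ∀ r ∉ Module.annihilator R M, ∃ y, r • y = x) :
    (⊥ : Submodule R (M →ₗ[R] N)).colon {g} = Module.annihilator R M := by
  ext r
  rw [Submodule.mem_colon_singleton, Submodule.mem_bot]
  refine ⟨fun hr => by_contra fun hrM => ?_, fun hr => ?_⟩
  · obtain ⟨y, rfl⟩ := hdiv r hrM
    exact hx (by simpa using LinearMap.congr_fun hr y)
  · ext m
    simp [← map_smul, Module.mem_annihilator.1 hr m]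

end ColonAnnihilator

theorem IsArtinian.annihilator_mem_associatedPrimes_linearMap {R : Type u} [CommRing R]
    [IsLocalRing R] {E : Type u} [AddCommGroup E] [Module R E] [Module.Injective R E]
    {ι : (R ⧸ maximalIdeal R) →ₗ[R] E} (hι : Function.Injective ι)
    {M : Type*} [AddCommGroup M] [Module R M] [IsArtinian R M]
    (hp : (Module.annihilator R M).IsPrime) :
    Module.annihilator R M ∈ associatedPrimes R (M →ₗ[R] E) := by
  obtain ⟨x, hx, hdiv⟩ := IsArtinian.exists_ne_zero_forall_exists_smul_eq hp
  obtain ⟨g, hg⟩ := exists_linearMap_apply_ne_zero hι hx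
  refine ⟨hp, g, ?_⟩
  rw [LinearMap.colon_bot_singleton_eq_annihilator hg hdiv, hp.radical]

/-- over a Noetherian local ring, `Att_R A = Ass_R (Hom_R (A, E(R/m)))` for
`A` Artinian, where `E(R/m)` is the injective envelope of the residue field. -/
theorem attachedPrimes_eq_associatedPrimes_dual (R : Type u) [CommRing R]
    [IsNoetherianRing R] [IsLocalRing R]
    (A : Type u) [AddCommGroup A] [Module R A] [IsArtinian R A]
    (E : Type u) [AddCommGroup E] [Module R E]
    (ι : (R ⧸ IsLocalRing.maximalIdeal R) →ₗ[R] E)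
    (hE : IsInjectiveEnvelope R (R ⧸ IsLocalRing.maximalIdeal R) E ι) :
    attachedPrimes R A = associatedPrimes R (A →ₗ[R] E) := by
  have := hE.injective
  ext p
  constructor
  · rintro ⟨hp, N, rfl⟩
    exact associatedPrimes.subset_of_injective
      (LinearMap.lcomp_injective_of_surjective N.mkQ N.mkQ_surjective)
      (IsArtinian.annihilator_mem_associatedPrimes_linearMap hE.mono hp)
  · intro hass
    obtain ⟨hp, f, rfl⟩ := (isAssociatedPrime_iff (M := A →ₗ[R] E)).1 hass
    exact ⟨hp, LinearMap.ker f, (f.colon_bot_singleton_eq_annihilator_quotient_ker).symm⟩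
end
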